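/- Let X be a finite-dimensional real inner product space, m ≥ 2, I = {1,…,m}, and for each i ∈ I let g_i : X → (−∞,+∞] be proper lower semicontinuous convex. On the Hilbert direct sum 𝐗 = X^m, let Δ = {(x,…,x) : x ∈ X} be the diagonal, 𝐠(x₁,…,x_m) = Σ_i g_i(x_i), 𝐓 = Id − P_Δ + Prox_𝐠 ∘ R_Δ the Douglas–Rachford operator on 𝐗, and 𝐯 = (v₁,…,v_m) = P_{closure(ran(Id−𝐓))}(0). Assume 0 ∈ Δ^⊥ + dom 𝐠* and that 𝐙 = {𝐱 ∈ 𝐗 : 𝐯 ∈ N_Δ(𝐱) + ∂𝐠(𝐱 − 𝐯)} is nonempty. If j ∈ I satisfies dom g_j = X, then v_j = 0. -/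

import Mathlib

open scoped RealInnerProductSpace Pointwise
open Filter Topology

noncomputable section

variable {X : Type*}

section Defs
variable [NormedAddCommGroup X] [InnerProductSpace ℝ X]

/-- `p` is the metric projection of `x` onto `S`: `p ∈ S` and
`⟪s − p, x − p⟫ ≤ 0` for all `s ∈ S`. -/
def IsMetricProj (S : Set X) (x p : X) : Prop :=
  p ∈ S ∧ ∀ s ∈ S, ⟪s - p, x - p⟫ ≤ (0 : ℝ)

/-- a function `X → (−∞,+∞]` is proper: never `−∞` and somewhere finite. -/
def EProper (g : X → EReal) : Prop :=
  (∀ x, g x ≠ ⊥) ∧ ∃ x, g x ≠ ⊤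

/-- convexity for extended-real-valued functions. -/
def EConvexOn (g : X → EReal) : Prop :=
  ∀ x y : X, ∀ a b : ℝ, 0 ≤ a → 0 ≤ b → a + b = 1 →
    g (a • x + b • y) ≤ (a : EReal) * g x + (b : EReal) * g y

/-- the convex subdifferential `∂g(x)`. -/
def ESubdiff (g : X → EReal) (x : X) : Set X :=
  {xs | ∀ z : X, g x + ((⟪z - x, xs⟫ : ℝ) : EReal) ≤ g z}

/-- the Fenchel conjugate `g*`. -/
def EConj (g : X → EReal) (xs : X) : EReal :=
  ⨆ x : X, ((⟪x, xs⟫ : ℝ) : EReal) - g x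

/-- `prox` is the proximal mapping of `g`: `prox x` minimizes
`y ↦ g y + ‖y − x‖²/2`. -/
def IsProx (g : X → EReal) (prox : X → X) : Prop :=
  ∀ x y : X,
    g (prox x) + ((‖prox x - x‖ ^ 2 / 2 : ℝ) : EReal) ≤
      g y + ((‖y - x‖ ^ 2 / 2 : ℝ) : EReal)

/-- the normal cone operator of a closed linear subspace:
`N_U(x) = U^⊥` if `x ∈ U`, and `∅` otherwise. -/
def normalCone (U : Submodule ℝ X) (x : X) : Set X :=
  {u | x ∈ U ∧ u ∈ Uᗮ}

/-- `c` is a weak cluster point of the sequence `s`, i.e. the weak limit of a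
subsequence of `s`. -/
def IsWeakClusterPt (s : ℕ → X) (c : X) : Prop :=
  ∃ φ : ℕ → ℕ, StrictMono φ ∧
    ∀ w : X, Tendsto (fun k => (⟪s (φ k), w⟫ : ℝ)) atTop (𝓝 ⟪c, w⟫)

end Defs

section ProductSetup
variable [NormedAddCommGroup X] [InnerProductSpace ℝ X] {m : ℕ}

/-- the inner product of the Hilbert direct sum `𝐗 = X^m`:
`⟪𝐱,𝐲⟫ = Σᵢ ⟪xᵢ,yᵢ⟫`. -/
def bInner (x y : Fin m → X) : ℝ := ∑ i, ⟪x i, y i⟫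

/-- the separable sum `𝐠 = ⊕ᵢ gᵢ`, `𝐠(x₁,…,x_m) = Σᵢ gᵢ(xᵢ)`. -/
def bSum (g : Fin m → X → EReal) (x : Fin m → X) : EReal := ∑ i, g i (x i)

/-- the subdifferential of `𝐠` on `𝐗` (equivalently, `∂g₁ × ⋯ × ∂g_m`). -/
def bSubdiff (g : Fin m → X → EReal) (x : Fin m → X) : Set (Fin m → X) :=
  {b | ∀ z : Fin m → X, bSum g x + ((bInner (z - x) b : ℝ) : EReal) ≤ bSum g z}

/-- metric projection characterization in `𝐗 = X^m`. -/
def bIsMetricProj (S : Set (Fin m → X)) (x p : Fin m → X) : Prop :=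
  p ∈ S ∧ ∀ s ∈ S, bInner (s - p) (x - p) ≤ (0 : ℝ)

end ProductSetup

/-!
Write a point of `𝐙` as `(c, …, c)` with `v = a + b`, `∑ aᵢ = 0` and `bᵢ ∈ ∂gᵢ(c - vᵢ)`, and let
`μ` be the mean of the `vᵢ`, so that `P_Δ v = (μ, …, μ)`. The displacements of the points
`c + vᵢ - bᵢ - n vᵢ` lie in `ran (Id - 𝐓)`; the variational inequality defining `𝐯`, together with
firm nonexpansiveness of the proximal maps, shows by induction on `n` that
`bᵢ + n (vᵢ - μ) ∈ ∂gᵢ(c - vᵢ - n μ)` for every `n`. Fenchel–Young at a point `w ∈ Δ^⊥ ∩ dom 𝐠*`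
then bounds `n m ‖μ‖²` independently of `n`, so `μ = 0`. Hence `∂g_j(c - v_j)` contains the whole
ray `b_j + n v_j`, and since `g_j` is finite at `c` the subgradient inequality bounds `n ‖v_j‖²`,
forcing `v_j = 0`.
-/

lemma EReal.coe_finset_sum {ι : Type*} (s : Finset ι) (f : ι → ℝ) :
    ((∑ i ∈ s, f i : ℝ) : EReal) = ∑ i ∈ s, (f i : EReal) := by
  induction s using Finset.cons_induction <;> simp [*, EReal.coe_add]

lemma EReal.sum_ne_bot {ι : Type*} {s : Finset ι} {F : ι → EReal}
    (hF : ∀ i ∈ s, F i ≠ ⊥) : ∑ i ∈ s, F i ≠ ⊥ :=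
  Finset.sum_induction F (· ≠ ⊥) (fun _ _ ha hb => EReal.add_ne_bot_iff.2 ⟨ha, hb⟩)
    EReal.zero_ne_bot hF

lemma EReal.ne_top_of_sum_ne_top {ι : Type*} {s : Finset ι} {F : ι → EReal}
    (hF : ∀ i ∈ s, F i ≠ ⊥) (h : ∑ i ∈ s, F i ≠ ⊤) {i : ι} (hi : i ∈ s) : F i ≠ ⊤ := by
  classical
  intro hFi
  rw [← Finset.add_sum_erase _ _ hi, hFi] at h
  exact h (EReal.top_add_of_ne_bot
    (EReal.sum_ne_bot fun k hk => hF k (Finset.mem_of_mem_erase hk)))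

lemma EReal.sum_eq_coe_sum_toReal {ι : Type*} {s : Finset ι} {F : ι → EReal}
    (hbot : ∀ i ∈ s, F i ≠ ⊥) (htop : ∀ i ∈ s, F i ≠ ⊤) :
    ∑ i ∈ s, F i = ((∑ i ∈ s, (F i).toReal : ℝ) : EReal) := by
  rw [EReal.coe_finset_sum]
  exact Finset.sum_congr rfl fun i hi => (EReal.coe_toReal (htop i hi) (hbot i hi)).symm

lemma nonpos_of_forall_nat_add_mul_le {a b q : ℝ} (h : ∀ n : ℕ, a + n * q ≤ b) : q ≤ 0 := by
  by_contra! hq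
  obtain ⟨n, hn⟩ := exists_nat_gt ((b - a) / q)
  rw [div_lt_iff₀ hq] at hn
  linarith [h n]

lemma le_of_forall_le_add_mul {a b C : ℝ} (h : ∀ s : ℝ, 0 < s → s ≤ 1 → a ≤ b + s * C) :
    a ≤ b := by
  have hlim : Tendsto (fun s : ℝ => b + s * C) (𝓝[>] 0) (𝓝 b) := by
    have hcont : Continuous fun s : ℝ => b + s * C := by fun_prop
    exact (hcont.tendsto' 0 b (by simp)).mono_left nhdsWithin_le_nhds
  refine ge_of_tendsto hlim ?_
  filter_upwards [Ioc_mem_nhdsGT one_pos] with s hs using h s hs.1 hs.2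

section SingleFunction
variable {g : X → EReal} {prox : X → X}

lemma EProper.coe_toReal (hg : EProper g) {x : X} (hx : g x ≠ ⊤) : ((g x).toReal : EReal) = g x :=
  EReal.coe_toReal hx (hg.1 x)

lemma IsProx.ne_top [NormedAddCommGroup X] (hp : IsProx g prox) (hg : EProper g) (t : X) :
    g (prox t) ≠ ⊤ := by
  obtain ⟨z, hz⟩ := hg.2
  intro htop
  have h := hp t z
  rw [htop, EReal.top_add_of_ne_bot (EReal.coe_ne_bot _)] at h
  exact (EReal.add_lt_top hz (EReal.coe_ne_top _)).ne (top_le_iff.mp h)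

variable [NormedAddCommGroup X] [InnerProductSpace ℝ X]

lemma ne_top_of_mem_ESubdiff (hg : EProper g) {q u : X} (hu : u ∈ ESubdiff g q) : g q ≠ ⊤ := by
  obtain ⟨z, hz⟩ := hg.2
  intro hq
  have h := hu z
  rw [hq, EReal.top_add_of_ne_bot (EReal.coe_ne_bot _)] at h
  exact hz (top_le_iff.mp h)

lemma toReal_add_inner_le_of_mem_ESubdiff (hg : EProper g) {q u : X} (hu : u ∈ ESubdiff g q)
    {z : X} (hz : g z ≠ ⊤) : (g q).toReal + ⟪z - q, u⟫ ≤ (g z).toReal := by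
  have h := hu z
  rw [← hg.coe_toReal (ne_top_of_mem_ESubdiff hg hu), ← hg.coe_toReal hz] at h
  exact_mod_cast h

lemma mem_ESubdiff_of_toReal (hg : EProper g) {q u : X} (hq : g q ≠ ⊤)
    (h : ∀ z, g z ≠ ⊤ → (g q).toReal + ⟪z - q, u⟫ ≤ (g z).toReal) : u ∈ ESubdiff g q := by
  intro z
  by_cases hz : g z = ⊤
  · exact hz ▸ le_top
  · rw [← hg.coe_toReal hq, ← hg.coe_toReal hz]
    exact_mod_cast h z hz

lemma EConj.inner_sub_toReal_le (hg : EProper g) {w : X} (hw : EConj g w ≠ ⊤) {x : X}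
    (hx : g x ≠ ⊤) : ⟪x, w⟫ - (EConj g w).toReal ≤ (g x).toReal := by
  have hle : ((⟪x, w⟫ - (g x).toReal : ℝ) : EReal) ≤ EConj g w := by
    rw [EReal.coe_sub, hg.coe_toReal hx]
    exact le_iSup (fun y : X => ((⟪y, w⟫ : ℝ) : EReal) - g y) x
  have hbot : EConj g w ≠ ⊥ := ne_bot_of_le_ne_bot (EReal.coe_ne_bot _) hle
  rw [← EReal.coe_toReal hw hbot, EReal.coe_le_coe_iff] at hle
  linarith

lemma eq_zero_of_forall_add_smul_mem_ESubdiff (hg : EProper g) {q u d : X}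
    (h : ∀ n : ℕ, u + (n : ℝ) • d ∈ ESubdiff g q) (hd : g (q + d) ≠ ⊤) : d = 0 := by
  have hsq : ⟪d, d⟫ ≤ 0 := by
    refine nonpos_of_forall_nat_add_mul_le (a := (g q).toReal + ⟪d, u⟫)
      (b := (g (q + d)).toReal) fun n => ?_
    have := toReal_add_inner_le_of_mem_ESubdiff hg (h n) hd
    rw [add_sub_cancel_left, inner_add_right, real_inner_smul_right] at this
    linarith
  exact inner_self_eq_zero.mp (le_antisymm hsq real_inner_self_nonneg)

namespace IsProx

lemma sub_mem_ESubdiff (hp : IsProx g prox) (hg : EProper g) (hconv : EConvexOn g) (t : X) :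
    t - prox t ∈ ESubdiff g (prox t) := by
  set p := prox t
  have hpt := hp.ne_top hg t
  refine mem_ESubdiff_of_toReal hg hpt fun z hz =>
    le_of_forall_le_add_mul (C := ‖z - p‖ ^ 2 / 2) fun s hs hs1 => ?_
  have hchain := (hp t ((1 - s) • p + s • z)).trans
    (add_le_add_left (hconv p z (1 - s) s (by linarith) hs.le (by ring)) _)
  rw [← hg.coe_toReal hpt, ← hg.coe_toReal hz] at hchain
  have hre : (g p).toReal + ‖t - p‖ ^ 2 / 2 ≤ (1 - s) * (g p).toReal + s * (g z).toReal
      + ‖(1 - s) • p + s • z - t‖ ^ 2 / 2 := by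
    rw [norm_sub_rev]; exact_mod_cast hchain
  have hexpand : ‖(1 - s) • p + s • z - t‖ ^ 2
      = s ^ 2 * ‖z - p‖ ^ 2 - 2 * s * ⟪z - p, t - p⟫ + ‖t - p‖ ^ 2 := by
    rw [show (1 - s) • p + s • z - t = s • (z - p) - (t - p) by
      rw [sub_smul, one_smul, smul_sub]; abel, norm_sub_sq_real, norm_smul,
      real_inner_smul_left, Real.norm_of_nonneg hs.le]
    ring
  rw [hexpand] at hre
  refine le_of_mul_le_mul_left ?_ hs
  linarith

lemma apply_add_of_mem_ESubdiff (hp : IsProx g prox) (hg : EProper g) {q u : X}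
    (hu : u ∈ ESubdiff g q) : prox (q + u) = q := by
  set p := prox (q + u)
  have hq := ne_top_of_mem_ESubdiff hg hu
  have hmin : (g p).toReal + ‖(p - q) - u‖ ^ 2 / 2 ≤ (g q).toReal + ‖u‖ ^ 2 / 2 := by
    have h := hp (q + u) q
    rw [← hg.coe_toReal (hp.ne_top hg _), ← hg.coe_toReal hq,
      show q - (q + u) = -u by abel, norm_neg, show p - (q + u) = (p - q) - u by abel] at h
    exact_mod_cast h
  have hsub := toReal_add_inner_le_of_mem_ESubdiff hg hu (hp.ne_top hg (q + u))
  rw [norm_sub_sq_real] at hmin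
  have : ‖p - q‖ ^ 2 ≤ 0 := by linarith
  exact sub_eq_zero.mp (norm_eq_zero.mp (pow_eq_zero_iff two_ne_zero |>.mp
    (le_antisymm this (sq_nonneg _))))

lemma norm_sub_sq_le_inner (hp : IsProx g prox) (hg : EProper g) (hconv : EConvexOn g)
    (t t' : X) : ‖prox t - prox t'‖ ^ 2 ≤ ⟪prox t - prox t', t - t'⟫ := by
  have h := toReal_add_inner_le_of_mem_ESubdiff hg (hp.sub_mem_ESubdiff hg hconv t)
    (hp.ne_top hg t')
  have h' := toReal_add_inner_le_of_mem_ESubdiff hg (hp.sub_mem_ESubdiff hg hconv t')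
    (hp.ne_top hg t)
  have e : ⟪prox t - prox t', t - t'⟫ - ‖prox t - prox t'‖ ^ 2 =
      -(⟪prox t' - prox t, t - prox t⟫ + ⟪prox t - prox t', t' - prox t'⟫) := by
    rw [← real_inner_self_eq_norm_sq]
    simp only [inner_sub_left, inner_sub_right, real_inner_comm]
    ring
  linarith

end IsProx

end SingleFunction

section Product
variable [NormedAddCommGroup X] [InnerProductSpace ℝ X] {m : ℕ} {g : Fin m → X → EReal}
  {x b : Fin m → X}

lemma ne_top_of_mem_bSubdiff (hg : ∀ i, EProper (g i)) (hb : b ∈ bSubdiff g x) (i : Fin m) :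
    g i (x i) ≠ ⊤ := by
  choose y hy using fun i => (hg i).2
  have hsum : bSum g x ≠ ⊤ := by
    intro htop
    have h := hb y
    rw [htop, EReal.top_add_of_ne_bot (EReal.coe_ne_bot _), top_le_iff, bSum,
      EReal.sum_eq_coe_sum_toReal (fun i _ => (hg i).1 _) fun i _ => hy i] at h
    exact EReal.coe_ne_top _ h
  exact EReal.ne_top_of_sum_ne_top (fun i _ => (hg i).1 _) hsum (Finset.mem_univ i)

lemma mem_ESubdiff_of_mem_bSubdiff (hg : ∀ i, EProper (g i)) (hb : b ∈ bSubdiff g x)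
    (i : Fin m) : b i ∈ ESubdiff (g i) (x i) := by
  classical
  have hx := ne_top_of_mem_bSubdiff hg hb
  refine mem_ESubdiff_of_toReal (hg i) (hx i) fun z hz => ?_
  have hupd : ∀ k, g k (Function.update x i z k) ≠ ⊤ := fun k => by
    rcases eq_or_ne k i with rfl | hk
    · rwa [Function.update_self]
    · rw [Function.update_of_ne hk]; exact hx k
  have h := hb (Function.update x i z)
  rw [bSum, bSum, EReal.sum_eq_coe_sum_toReal (fun k _ => (hg k).1 _) fun k _ => hx k,
    EReal.sum_eq_coe_sum_toReal (fun k _ => (hg k).1 _) fun k _ => hupd k,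
    ← EReal.coe_add, EReal.coe_le_coe_iff] at h
  have hinner : bInner (Function.update x i z - x) b = ⟪z - x i, b i⟫ := by
    rw [bInner, Finset.sum_eq_single i (fun k _ hk => by simp [Function.update_of_ne hk])
      (by simp), Pi.sub_apply, Function.update_self]
  have hsplit : ∑ k, (g k (Function.update x i z k)).toReal
      = (g i z).toReal + ∑ k ∈ Finset.univ \ {i}, (g k (x k)).toReal := by
    rw [← Finset.sum_update_of_mem (Finset.mem_univ i)]
    exact Finset.sum_congr rfl fun k _ =>
      (Function.apply_update (fun k y => (g k y).toReal) x i z k)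
  rw [hinner, hsplit, Finset.sum_eq_add_sum_sdiff_singleton_of_mem (Finset.mem_univ i)] at h
  linarith

lemma sum_inner_nonpos_of_bIsMetricProj {S : Set (Fin m → X)} {v δ : Fin m → X}
    (hv : bIsMetricProj S 0 v) (hδ : v - δ ∈ S) : ∑ i, ⟪δ i, v i⟫ ≤ 0 := by
  have h := hv.2 _ hδ
  simpa only [bInner, Pi.sub_apply, Pi.zero_apply, sub_sub_cancel_left, zero_sub,
    inner_neg_neg] using h

end Product

section DouglasRachford
variable [NormedAddCommGroup X] [InnerProductSpace ℝ X] {m : ℕ} {g : Fin m → X → EReal}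
  {prox : Fin m → X → X} {PD T : (Fin m → X) → (Fin m → X)} {b v : Fin m → X} {c μ : X}

lemma self_sub_T_orbit (hm : m ≠ 0)
    (hPD : ∀ x : Fin m → X, PD x = fun _ => (m : ℝ)⁻¹ • ∑ i, x i)
    (hT : ∀ x : Fin m → X, T x = x - PD x + fun i => prox i ((2 • PD x - x) i))
    (hμ : (m : ℝ) • μ = ∑ i, v i) (hb : ∑ i, b i = ∑ i, v i) (s : ℝ) :
    (fun i => c + v i - b i - s • v i) - T (fun i => c + v i - b i - s • v i)
      = fun i => c - s • μ - prox i (c - v i - s • μ + (b i + s • (v i - μ))) := by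
  have hPDz : PD (fun i => c + v i - b i - s • v i) = fun _ => c - s • μ := by
    have hsum : ∑ i, (c + v i - b i - s • v i) = (m : ℝ) • (c - s • μ) := by
      simp only [Finset.sum_sub_distrib, Finset.sum_add_distrib, Finset.sum_const,
        Finset.card_univ, Fintype.card_fin, ← Finset.smul_sum, hb, ← hμ,
        ← Nat.cast_smul_eq_nsmul ℝ, smul_sub, smul_comm s (m : ℝ)]
      abel
    rw [hPD, hsum, inv_smul_smul₀ (Nat.cast_ne_zero.2 hm)]
  funext i
  simp only [hT, hPDz, Pi.sub_apply, Pi.add_apply, two_nsmul]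
  rw [show c - s • μ + (c - s • μ) - (c + v i - b i - s • v i)
    = c - v i - s • μ + (b i + s • (v i - μ)) by rw [smul_sub]; abel]
  abel

lemma mem_ESubdiff_orbit_succ (hg : ∀ i, EProper (g i)) (hconv : ∀ i, EConvexOn (g i))
    (hprox : ∀ i, IsProx (g i) (prox i)) (hm : m ≠ 0)
    (hPD : ∀ x : Fin m → X, PD x = fun _ => (m : ℝ)⁻¹ • ∑ i, x i)
    (hT : ∀ x : Fin m → X, T x = x - PD x + fun i => prox i ((2 • PD x - x) i))
    (hv : bIsMetricProj (closure (Set.range fun x : Fin m → X => x - T x)) 0 v)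
    (hμ : (m : ℝ) • μ = ∑ i, v i) (hb : ∑ i, b i = ∑ i, v i) {s : ℝ}
    (hs : ∀ i, b i + s • (v i - μ) ∈ ESubdiff (g i) (c - v i - s • μ)) (i : Fin m) :
    b i + (s + 1) • (v i - μ) ∈ ESubdiff (g i) (c - v i - (s + 1) • μ) := by
  set arg : ℝ → Fin m → X := fun r i => c - v i - r • μ + (b i + r • (v i - μ))
  set δ : Fin m → X := fun i => prox i (arg (s + 1) i) - (c - v i - (s + 1) • μ)
  have hproj : ∑ i, ⟪δ i, v i⟫ ≤ 0 := by
    refine sum_inner_nonpos_of_bIsMetricProj hv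
      (subset_closure ⟨fun i => c + v i - b i - (s + 1) • v i, ?_⟩)
    refine (self_sub_T_orbit hm hPD hT hμ hb (s + 1)).trans (funext fun i => ?_)
    simp only [δ, Pi.sub_apply]
    abel
  have hfirm : ∀ i, ‖δ i‖ ^ 2 ≤ ⟪δ i, v i⟫ + (‖μ‖ ^ 2 - ⟪μ, v i⟫) := by
    intro i
    have h := (hprox i).norm_sub_sq_le_inner (hg i) (hconv i) (arg (s + 1) i) (arg s i)
    rw [(hprox i).apply_add_of_mem_ESubdiff (hg i) (hs i),
      show prox i (arg (s + 1) i) - (c - v i - s • μ) = δ i - μ by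
        simp only [δ, add_smul, one_smul]; abel,
      show arg (s + 1) i - arg s i = v i - 2 • μ by
        simp only [arg, add_smul, one_smul, two_nsmul]; abel] at h
    rw [norm_sub_sq_real, two_nsmul] at h
    simp only [inner_sub_left, inner_sub_right, inner_add_right, real_inner_self_eq_norm_sq,
      real_inner_comm μ (δ i)] at h
    linarith
  have hbalance : ∑ i, (‖μ‖ ^ 2 - ⟪μ, v i⟫) = 0 := by
    rw [Finset.sum_sub_distrib, ← inner_sum, ← hμ, Finset.sum_const, Finset.card_univ,
      Fintype.card_fin, real_inner_smul_right, real_inner_self_eq_norm_sq, nsmul_eq_mul,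
      sub_self]
  have hδ : ∀ i ∈ Finset.univ, ‖δ i‖ ^ 2 = 0 := by
    refine (Finset.sum_eq_zero_iff_of_nonneg fun i _ => sq_nonneg _).mp (le_antisymm ?_
      (Finset.sum_nonneg fun i _ => sq_nonneg _))
    have := Finset.sum_le_sum fun i (_ : i ∈ Finset.univ) => hfirm i
    rw [Finset.sum_add_distrib, hbalance] at this
    linarith
  have hfixed : prox i (arg (s + 1) i) = c - v i - (s + 1) • μ := by
    simpa [δ, sub_eq_zero] using hδ i (Finset.mem_univ i)
  have h := (hprox i).sub_mem_ESubdiff (hg i) (hconv i) (arg (s + 1) i)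
  rwa [hfixed, add_sub_cancel_left] at h

lemma mem_ESubdiff_orbit (hg : ∀ i, EProper (g i)) (hconv : ∀ i, EConvexOn (g i))
    (hprox : ∀ i, IsProx (g i) (prox i)) (hm : m ≠ 0)
    (hPD : ∀ x : Fin m → X, PD x = fun _ => (m : ℝ)⁻¹ • ∑ i, x i)
    (hT : ∀ x : Fin m → X, T x = x - PD x + fun i => prox i ((2 • PD x - x) i))
    (hv : bIsMetricProj (closure (Set.range fun x : Fin m → X => x - T x)) 0 v)
    (hμ : (m : ℝ) • μ = ∑ i, v i) (hb : ∑ i, b i = ∑ i, v i)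
    (h₀ : ∀ i, b i ∈ ESubdiff (g i) (c - v i)) (n : ℕ) (i : Fin m) :
    b i + (n : ℝ) • (v i - μ) ∈ ESubdiff (g i) (c - v i - (n : ℝ) • μ) := by
  induction n generalizing i with
  | zero => simpa using h₀ i
  | succ n ih =>
    simpa using mem_ESubdiff_orbit_succ hg hconv hprox hm hPD hT hv hμ hb ih i

lemma eq_zero_of_forall_mem_ESubdiff_orbit {w : Fin m → X} (hg : ∀ i, EProper (g i))
    (hm : m ≠ 0) (hμ : (m : ℝ) • μ = ∑ i, v i) (hb : ∑ i, b i = ∑ i, v i) (hw : ∑ i, w i = 0) (hwdom : ∀ i, EConj (g i) (w i) ≠ ⊤)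
    (horbit : ∀ (n : ℕ) i, b i + (n : ℝ) • (v i - μ) ∈ ESubdiff (g i) (c - v i - (n : ℝ) • μ)) :
    μ = 0 := by
  have hsq : (m : ℝ) * ⟪μ, μ⟫ ≤ 0 := by
    refine nonpos_of_forall_nat_add_mul_le
      (a := ∑ i, (⟪c - v i, w i⟫ - (EConj (g i) (w i)).toReal))
      (b := ∑ i, (g i (c - v i)).toReal) fun n => ?_
    have hterm : ∀ i, ⟪c - v i, w i⟫ - (EConj (g i) (w i)).toReal
        + n * ⟪μ, b i - w i + (n : ℝ) • (v i - μ)⟫ ≤ (g i (c - v i)).toReal := by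
      intro i
      have hfin : g i (c - v i) ≠ ⊤ := by
        simpa using ne_top_of_mem_ESubdiff (hg i) (horbit 0 i)
      have hFY := EConj.inner_sub_toReal_le (hg i) (hwdom i)
        (ne_top_of_mem_ESubdiff (hg i) (horbit n i))
      have hsub := toReal_add_inner_le_of_mem_ESubdiff (hg i) (horbit n i) hfin
      rw [sub_sub_cancel] at hsub
      simp only [inner_sub_left, inner_add_right, inner_sub_right, real_inner_smul_left,
        real_inner_smul_right] at hFY hsub ⊢
      linarith
    have hsum : ∑ i, (b i - w i + (n : ℝ) • (v i - μ)) = (m : ℝ) • μ := by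
      simp only [Finset.sum_add_distrib, Finset.sum_sub_distrib, ← Finset.smul_sum, hb, hw,
        ← hμ, Finset.sum_const, Finset.card_univ, Fintype.card_fin, ← Nat.cast_smul_eq_nsmul ℝ,
        sub_self, smul_zero, add_zero, sub_zero]
    have := Finset.sum_le_sum fun i (_ : i ∈ Finset.univ) => hterm i
    rw [Finset.sum_add_distrib, ← Finset.mul_sum, ← inner_sum, hsum, real_inner_smul_right]
      at this
    exact this
  have hm' : (0 : ℝ) < m := Nat.cast_pos.2 (Nat.pos_of_ne_zero hm)
  exact inner_self_eq_zero.mp (le_antisymm (nonpos_of_mul_nonpos_right hsq hm')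
    real_inner_self_nonneg)

end DouglasRachford

theorem product_displacement_component_zero_general
    [NormedAddCommGroup X] [InnerProductSpace ℝ X]
    {m : ℕ}
    (g : Fin m → X → EReal)
    (hgproper : ∀ i, EProper (g i))
    (hgconv : ∀ i, EConvexOn (g i))
    (prox : Fin m → X → X) (hprox : ∀ i, IsProx (g i) (prox i))
    (PD T : (Fin m → X) → (Fin m → X))
    (hPD : ∀ x : Fin m → X, PD x = fun _ => (m : ℝ)⁻¹ • ∑ i, x i)
    (hT : ∀ x : Fin m → X, T x = x - PD x + fun i => prox i ((2 • PD x - x) i))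
    (v : Fin m → X)
    (hv : bIsMetricProj (closure (Set.range fun x : Fin m → X => x - T x)) 0 v)
    (hCQ : ∃ u w : Fin m → X,
      (∑ i, u i) = (0 : X) ∧ (∀ i, EConj (g i) (w i) ≠ ⊤) ∧ u + w = 0)
    (Z : Set (Fin m → X))
    (hZ : Z = {x | ∃ a b : Fin m → X,
      ((∃ c : X, ∀ i, x i = c) ∧ (∑ i, a i) = (0 : X)) ∧
      b ∈ bSubdiff g (x - v) ∧ v = a + b})
    (hZne : Z.Nonempty)
    (j : Fin m) (hj : ∀ t : X, g j t ≠ ⊤) :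
    v j = 0 := by
  obtain ⟨x, a, b, ⟨⟨c, hc⟩, ha⟩, hbx, hvab⟩ := hZ ▸ hZne
  obtain ⟨u, w, hu, hwdom, huw⟩ := hCQ
  have hm : m ≠ 0 := j.pos.ne'
  have h₀ : ∀ i, b i ∈ ESubdiff (g i) (c - v i) := fun i => by
    simpa [hc] using mem_ESubdiff_of_mem_bSubdiff hgproper hbx i
  have hb : ∑ i, b i = ∑ i, v i := by simp [hvab, Finset.sum_add_distrib, ha]
  have hw : ∑ i, w i = 0 := by simp [eq_neg_of_add_eq_zero_right huw, hu]
  set μ : X := (m : ℝ)⁻¹ • ∑ i, v i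
  have hμ : (m : ℝ) • μ = ∑ i, v i := smul_inv_smul₀ (Nat.cast_ne_zero.2 hm) _
  have horbit := mem_ESubdiff_orbit hgproper hgconv hprox hm hPD hT hv hμ hb h₀
  have hμ0 : μ = 0 := eq_zero_of_forall_mem_ESubdiff_orbit hgproper hm hμ hb hw hwdom horbit
  exact eq_zero_of_forall_add_smul_mem_ESubdiff (hgproper j) (q := c - v j)
    (fun n => by simpa [hμ0] using horbit n j) (by simpa using hj c)

/-- In the product-space setup on `𝐗 = X^m` (with the diagonal
`Δ`, `𝐠 = ⊕ᵢ gᵢ`, the Douglas–Rachford operator `𝐓 = Id − P_Δ + Prox_𝐠 ∘ R_Δ`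
where `P_Δ 𝐱 = (x̄,…,x̄)`, `x̄ = (1/m) Σᵢ xᵢ`, and the minimal displacement vector
`𝐯 = P_{closure(ran(Id−𝐓))} 0`), assuming `0 ∈ Δ^⊥ + dom 𝐠*`
(`Δ^⊥ = {𝐮 : Σᵢ uᵢ = 0}`, `dom 𝐠* = Πᵢ dom gᵢ*`) and `𝐙 ≠ ∅`:
if `dom g_j = X` then `v_j = 0`. -/
theorem product_displacement_component_zero
    [NormedAddCommGroup X] [InnerProductSpace ℝ X] [FiniteDimensional ℝ X]
    {m : ℕ} (hm : 2 ≤ m)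
    (g : Fin m → X → EReal)
    (hgproper : ∀ i, EProper (g i)) (hglsc : ∀ i, LowerSemicontinuous (g i))
    (hgconv : ∀ i, EConvexOn (g i))
    (prox : Fin m → X → X) (hprox : ∀ i, IsProx (g i) (prox i))
    (PD T : (Fin m → X) → (Fin m → X))
    (hPD : ∀ x : Fin m → X, PD x = fun _ => (m : ℝ)⁻¹ • ∑ i, x i)
    (hT : ∀ x : Fin m → X, T x = x - PD x + fun i => prox i ((2 • PD x - x) i))
    (v : Fin m → X)
    (hv : bIsMetricProj (closure (Set.range fun x : Fin m → X => x - T x)) 0 v)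
    (hCQ : ∃ u w : Fin m → X,
      (∑ i, u i) = (0 : X) ∧ (∀ i, EConj (g i) (w i) ≠ ⊤) ∧ u + w = 0)
    (Z : Set (Fin m → X))
    (hZ : Z = {x | ∃ a b : Fin m → X,
      ((∃ c : X, ∀ i, x i = c) ∧ (∑ i, a i) = (0 : X)) ∧
      b ∈ bSubdiff g (x - v) ∧ v = a + b})
    (hZne : Z.Nonempty)
    (j : Fin m) (hj : ∀ t : X, g j t ≠ ⊤) :
    v j = 0 :=
  product_displacement_component_zero_general g hgproper hgconv prox hprox PD T hPD hT v hv hCQ Z hZ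
    hZne j hj
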